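/- Let k be a field of characteristic 3 and let f = z^2 + x^3 + x y^3 in k[x,y,z]. Then the Tjurina algebra k[x,y,z]/(f, ∂f/∂x, ∂f/∂y, ∂f/∂z) has k-dimension 9. -/

import Mathlib

open MvPolynomial

noncomputable section TjurinaAux

variable (k : Type*) [Field k]

/-- `k[x]/(x^3)`. -/
abbrev TjB := AdjoinRoot (Polynomial.X ^ 3 : Polynomial k)

/-- `(k[x]/(x^3))[y]/(y^3)`. -/
abbrev TjA := AdjoinRoot (Polynomial.X ^ 3 : Polynomial (TjB k))

lemma TjB_root_pow : (AdjoinRoot.root (Polynomial.X ^ 3 : Polynomial k)) ^ 3 = 0 := by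
  have := AdjoinRoot.eval₂_root (Polynomial.X ^ 3 : Polynomial k)
  simpa using this

lemma TjA_root_pow : (AdjoinRoot.root (Polynomial.X ^ 3 : Polynomial (TjB k))) ^ 3 = 0 := by
  have := AdjoinRoot.eval₂_root (Polynomial.X ^ 3 : Polynomial (TjB k))
  simpa using this

instance : Nontrivial (TjB k) :=
  AdjoinRoot.nontrivial _ (by simp [Polynomial.degree_X_pow])

lemma finrank_TjA : Module.finrank k (TjA k) = 9 := by
  have b1 := (AdjoinRoot.powerBasis' (Polynomial.monic_X_pow (R := k) 3)).basis
  have b2 := (AdjoinRoot.powerBasis' (Polynomial.monic_X_pow (R := TjB k) 3)).basis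
  have b := b1.smulTower b2
  rw [Module.finrank_eq_card_basis b]
  simp

end TjurinaAux

section Main

variable {k : Type*} [Field k]

/-- the ideal `(x^3, y^3, z)` -/
noncomputable abbrev TjJ : Ideal (MvPolynomial (Fin 3) k) :=
  Ideal.span {X 0 ^ 3, X 1 ^ 3, X 2}

lemma mem_x : (X 0 ^ 3 : MvPolynomial (Fin 3) k) ∈ (TjJ : Ideal (MvPolynomial (Fin 3) k)) :=
  Ideal.subset_span (by simp)
lemma mem_y : (X 1 ^ 3 : MvPolynomial (Fin 3) k) ∈ (TjJ : Ideal (MvPolynomial (Fin 3) k)) :=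
  Ideal.subset_span (by simp)
lemma mem_z : (X 2 : MvPolynomial (Fin 3) k) ∈ (TjJ : Ideal (MvPolynomial (Fin 3) k)) :=
  Ideal.subset_span (by simp)

/-- The map to `TjA k` sending `x ↦ b-root, y ↦ a-root, z ↦ 0`. -/
noncomputable def Tjφ : MvPolynomial (Fin 3) k →ₐ[k] TjA k :=
  aeval ![algebraMap (TjB k) (TjA k) (AdjoinRoot.root _), AdjoinRoot.root _, 0]

lemma Tjφ_vanish : ∀ a ∈ (TjJ : Ideal (MvPolynomial (Fin 3) k)), Tjφ a = 0 := by
  have hker : (TjJ : Ideal (MvPolynomial (Fin 3) k)) ≤ RingHom.ker (Tjφ (k := k)).toRingHom := by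
    rw [Ideal.span_le]
    rintro p hp
    simp only [Set.mem_insert_iff, Set.mem_singleton_iff] at hp
    rcases hp with rfl | rfl | rfl
    · show Tjφ ((X 0 : MvPolynomial (Fin 3) k) ^ 3) = 0
      rw [map_pow, show Tjφ (X 0 : MvPolynomial (Fin 3) k)
          = algebraMap (TjB k) (TjA k) (AdjoinRoot.root _) by
            simp [Tjφ, AdjoinRoot.algebraMap_eq],
        ← map_pow, TjB_root_pow, map_zero]
    · show Tjφ ((X 1 : MvPolynomial (Fin 3) k) ^ 3) = 0
      rw [map_pow, show Tjφ (X 1 : MvPolynomial (Fin 3) k) = AdjoinRoot.root _ by simp [Tjφ],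
        TjA_root_pow]
    · show Tjφ (X 2 : MvPolynomial (Fin 3) k) = 0
      simp [Tjφ]
  exact fun a ha => hker ha

/-- The quotient map `Q → TjA k`. -/
noncomputable def Tjφbar :
    (MvPolynomial (Fin 3) k ⧸ (TjJ : Ideal (MvPolynomial (Fin 3) k))) →ₐ[k] TjA k :=
  Ideal.Quotient.liftₐ _ Tjφ Tjφ_vanish

@[simp] lemma Tjφbar_mk (p : MvPolynomial (Fin 3) k) :
    Tjφbar (Ideal.Quotient.mk (TjJ : Ideal (MvPolynomial (Fin 3) k)) p) = Tjφ p := by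
  simp [Tjφbar]
  exact Ideal.Quotient.lift_mk _ _ _

/-- `TjB k → Q`, sending the root to `x`. -/
noncomputable def TjψB :
    TjB k →ₐ[k] (MvPolynomial (Fin 3) k ⧸ (TjJ : Ideal (MvPolynomial (Fin 3) k))) :=
  AdjoinRoot.liftAlgHom _ (Algebra.ofId _ _) (Ideal.Quotient.mk _ (X 0)) (by
    rw [Polynomial.eval₂_pow, Polynomial.eval₂_X, ← map_pow, Ideal.Quotient.eq_zero_iff_mem]
    exact mem_x)

/-- `TjA k → Q` as a ring hom, sending root to `y`. -/
noncomputable def Tjψ :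
    TjA k →+* (MvPolynomial (Fin 3) k ⧸ (TjJ : Ideal (MvPolynomial (Fin 3) k))) :=
  AdjoinRoot.lift (TjψB.toRingHom) (Ideal.Quotient.mk _ (X 1)) (by
    rw [Polynomial.eval₂_pow, Polynomial.eval₂_X, ← map_pow, Ideal.Quotient.eq_zero_iff_mem]
    exact mem_y)

lemma Tjψ_of (b : TjB k) : Tjψ (algebraMap (TjB k) (TjA k) b) = TjψB b := by
  rw [AdjoinRoot.algebraMap_eq, Tjψ, AdjoinRoot.lift_of]
  rfl

lemma Tjψ_algebraMap (c : k) :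
    Tjψ (algebraMap k (TjA k) c) = algebraMap k _ c := by
  rw [IsScalarTower.algebraMap_apply k (TjB k) (TjA k), Tjψ_of]
  exact TjψB.commutes c

/-- `TjA k → Q` as a `k`-algebra hom. -/
noncomputable def Tjψa :
    TjA k →ₐ[k] (MvPolynomial (Fin 3) k ⧸ (TjJ : Ideal (MvPolynomial (Fin 3) k))) :=
  { Tjψ with commutes' := Tjψ_algebraMap }

lemma Tjψa_apply (a : TjA k) : Tjψa a = Tjψ a := rfl

lemma Tj_comp1 : (Tjψa.comp Tjφbar :
    (MvPolynomial (Fin 3) k ⧸ (TjJ : Ideal (MvPolynomial (Fin 3) k))) →ₐ[k] _)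
      = AlgHom.id k _ := by
  apply Ideal.Quotient.algHom_ext
  apply MvPolynomial.algHom_ext
  intro i
  fin_cases i
  · show Tjψa (Tjφ (X 0 : MvPolynomial (Fin 3) k)) = Ideal.Quotient.mk _ (X 0)
    rw [show Tjφ (X 0 : MvPolynomial (Fin 3) k)
        = algebraMap (TjB k) (TjA k) (AdjoinRoot.root _) by
          simp [Tjφ, AdjoinRoot.algebraMap_eq],
      Tjψa_apply, Tjψ_of, TjψB, AdjoinRoot.liftAlgHom_root]
  · show Tjψa (Tjφ (X 1 : MvPolynomial (Fin 3) k)) = Ideal.Quotient.mk _ (X 1)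
    rw [show Tjφ (X 1 : MvPolynomial (Fin 3) k) = AdjoinRoot.root _ by simp [Tjφ],
      Tjψa_apply, Tjψ, AdjoinRoot.lift_root]
  · show Tjψa (Tjφ (X 2 : MvPolynomial (Fin 3) k)) = Ideal.Quotient.mk _ (X 2)
    rw [show Tjφ (X 2 : MvPolynomial (Fin 3) k) = 0 by simp [Tjφ], map_zero]
    exact (Ideal.Quotient.eq_zero_iff_mem.2 mem_z).symm

lemma Tj_B_case : ((Tjφbar.comp TjψB : TjB k →ₐ[k] TjA k))
    = IsScalarTower.toAlgHom k (TjB k) (TjA k) := by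
  apply AdjoinRoot.algHom_ext
  rw [AlgHom.comp_apply, TjψB, AdjoinRoot.liftAlgHom_root, Tjφbar_mk]
  simp [Tjφ]

lemma Tj_root_case :
    Tjφbar (Tjψa (AdjoinRoot.root (Polynomial.X ^ 3 : Polynomial (TjB k))))
      = AdjoinRoot.root _ := by
  rw [Tjψa_apply, Tjψ, AdjoinRoot.lift_root, Tjφbar_mk]
  simp [Tjφ]

set_option maxHeartbeats 2000000 in
lemma Tj_comp2 : (Tjφbar.comp Tjψa : TjA k →ₐ[k] TjA k) = AlgHom.id k _ := by
  apply AlgHom.ext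
  intro a
  induction a using AdjoinRoot.induction_on with
  | ih p =>
    simp only [AlgHom.comp_apply, AlgHom.id_apply]
    induction p using Polynomial.induction_on with
    | C b =>
      have h1 : (AdjoinRoot.mk (Polynomial.X ^ 3 : Polynomial (TjB k))) (Polynomial.C b)
          = algebraMap (TjB k) (TjA k) b := by rw [AdjoinRoot.algebraMap_eq]; rfl
      rw [h1, Tjψa_apply, Tjψ_of]
      simpa using DFunLike.congr_fun (Tj_B_case (k := k)) b
    | add p q hp hq =>
      rw [map_add, map_add, map_add, hp, hq]
    | monomial n b hb =>
      have hx : (AdjoinRoot.mk (Polynomial.X ^ 3 : Polynomial (TjB k)))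
            (Polynomial.C b * Polynomial.X ^ (n + 1))
          = (AdjoinRoot.mk _) (Polynomial.C b * Polynomial.X ^ n) * AdjoinRoot.root _ := by
        rw [← AdjoinRoot.mk_X, ← map_mul]
        congr 1
        ring
      rw [hx]
      have step : Tjφbar (Tjψa ((AdjoinRoot.mk (Polynomial.X ^ 3 : Polynomial (TjB k)))
            (Polynomial.C b * Polynomial.X ^ n) * AdjoinRoot.root _))
          = Tjφbar (Tjψa ((AdjoinRoot.mk (Polynomial.X ^ 3 : Polynomial (TjB k)))
            (Polynomial.C b * Polynomial.X ^ n))) * Tjφbar (Tjψa (AdjoinRoot.root _)) := by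
        simp only [map_mul]
      rw [step, hb, Tj_root_case]

set_option maxHeartbeats 1000000 in
/-- Equivalence. -/
noncomputable def TjEquiv :
    (MvPolynomial (Fin 3) k ⧸ (TjJ : Ideal (MvPolynomial (Fin 3) k))) ≃ₐ[k] TjA k :=
  AlgEquiv.ofAlgHom Tjφbar Tjψa Tj_comp2 Tj_comp1

end Main

/-- Tjurina algebra dimension. Variables: `X 0 = x`, `X 1 = y`, `X 2 = z`. -/
theorem tjurina_E7_0_char3 (k : Type*) [Field k] [CharP k 3]
    (f : MvPolynomial (Fin 3) k)
    (hf : f = X 2 ^ 2 + X 0 ^ 3 + X 0 * X 1 ^ 3) :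
    Module.finrank k
      (MvPolynomial (Fin 3) k ⧸
        (Ideal.span {f, pderiv 0 f, pderiv 1 f, pderiv 2 f} :
          Ideal (MvPolynomial (Fin 3) k))) = 9 := by
  have h3 : (3 : MvPolynomial (Fin 3) k) = 0 := by
    rw [← map_ofNat (C : k →+* MvPolynomial (Fin 3) k) 3,
      show ((3:k) = 0) from CharP.cast_eq_zero k 3, map_zero]
  have h2 : (2 : MvPolynomial (Fin 3) k) = C 2 := by
    rw [← map_ofNat (C : k →+* MvPolynomial (Fin 3) k) 2]
  have hd : pderiv 0 f = X 1 ^ 3 ∧ pderiv 1 f = 0 ∧ pderiv 2 f = (C 2) * X 2 := by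
    refine ⟨?_, ?_, ?_⟩ <;> subst hf <;> simp <;> ring_nf <;> first | exact h3 | exact h2
  obtain ⟨hd0, hd1, hd2⟩ := hd
  have hIJ : (Ideal.span {f, pderiv 0 f, pderiv 1 f, pderiv 2 f} :
      Ideal (MvPolynomial (Fin 3) k)) = TjJ := by
    rw [hd0, hd1, hd2]
    apply le_antisymm
    · rw [Ideal.span_le]
      rintro p hp
      simp only [Set.mem_insert_iff, Set.mem_singleton_iff] at hp
      rcases hp with rfl | rfl | rfl | rfl
      · rw [hf]
        exact add_mem (add_mem (Ideal.mul_mem_left _ _ mem_z)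
          (mem_x)) (Ideal.mul_mem_left _ _ mem_y)
      · exact mem_y
      · exact zero_mem _
      · exact Ideal.mul_mem_left _ _ mem_z
    · rw [Ideal.span_le]
      rintro p hp
      have hfmem : f ∈ (Ideal.span {f, X 1 ^ 3, (0:MvPolynomial (Fin 3) k), C 2 * X 2} :
          Ideal (MvPolynomial (Fin 3) k)) := Ideal.subset_span (Set.mem_insert _ _)
      have hymem : (X 1 ^ 3 : MvPolynomial (Fin 3) k) ∈
          (Ideal.span {f, X 1 ^ 3, (0:MvPolynomial (Fin 3) k), C 2 * X 2} :
          Ideal (MvPolynomial (Fin 3) k)) := Ideal.subset_span (by simp)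
      have hzmem : (X 2 : MvPolynomial (Fin 3) k) ∈
          (Ideal.span {f, X 1 ^ 3, (0:MvPolynomial (Fin 3) k), C 2 * X 2} :
          Ideal (MvPolynomial (Fin 3) k)) := by
        have h := Ideal.mul_mem_left _ (C (2:k)⁻¹)
          (Ideal.subset_span (show (C 2 * X 2 : MvPolynomial (Fin 3) k) ∈
            ({f, X 1 ^ 3, 0, C 2 * X 2} : Set (MvPolynomial (Fin 3) k)) by simp))
        have h2k : (2:k) ≠ 0 := by
          intro hq
          have := (CharP.cast_eq_zero_iff k 3 2).mp (by exact_mod_cast hq)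
          omega
        rw [← mul_assoc, ← C_mul, inv_mul_cancel₀ h2k, C_1, one_mul] at h
        exact h
      simp only [Set.mem_insert_iff, Set.mem_singleton_iff] at hp
      rcases hp with rfl | rfl | rfl
      · have hx0 : (X 0 ^ 3 : MvPolynomial (Fin 3) k) = f - X 2 * X 2 - X 0 * X 1 ^ 3 := by
          rw [hf]; ring
        rw [hx0]
        exact sub_mem (sub_mem hfmem (Ideal.mul_mem_left _ _ hzmem))
          (Ideal.mul_mem_left _ _ hymem)
      · exact hymem
      · exact hzmem
  rw [hIJ]
  rw [(TjEquiv (k := k)).toLinearEquiv.finrank_eq]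
  exact finrank_TjA k
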